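/- arXiv:1402.3402 — 2 statements merged into one kernel-verified Lean document; each statement's English description precedes it below -/
import Mathlib

section
/- Let A, A_1, …, A_M be real n×n matrices and B a real n×m matrix. Suppose the positive semidefinite real (n+m)×(n+m) matrix V = [[X, R],[Rᵀ, U]] satisfies the equation X = [A B] V [A B]ᵀ + Σ_{i=1}^M A_i X A_iᵀ + I_n. Then X ⪰ I_n (so X is positive definite and invertible), and the gain K = Rᵀ X⁻¹ satisfies (A + B K) X (A + B K)ᵀ + Σ_{i=1}^M A_i X A_iᵀ + I_n ⪯ X. -/
/-!
Since `V ⪰ 0`, both `[A B] V [A B]ᵀ` and (through the principal block `X ⪰ 0`) every `Aᵢ X Aᵢᵀ`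
are positive semidefinite, so the equation gives `X - 1 ⪰ 0` and hence `X ≻ 0`. Completing the
square with `K = Rᵀ X⁻¹` splits the first term as
`[A B] V [A B]ᵀ = (A + B K) X (A + B K)ᵀ + B (U - Rᵀ X⁻¹ R) Bᵀ`, and the Schur complement
`U - Rᵀ X⁻¹ R` of the positive definite block `X` in `V ⪰ 0` is positive semidefinite. So the
closed-loop expression falls short of `X` exactly by `B (U - Rᵀ X⁻¹ R) Bᵀ ⪰ 0`.
-/

open Matrix

/-- Horizontal concatenation `[A B]` of two matrices with the same row index. -/
def hcat {n p q : ℕ} {α : Type*} (A : Matrix (Fin n) (Fin p) α) (B : Matrix (Fin n) (Fin q) α) :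
    Matrix (Fin n) (Fin (p + q)) α :=
  Matrix.of fun i => Fin.append (A i) (B i)

/-- Vertical concatenation of two matrices with the same column index. -/
def vcat {p q n : ℕ} {α : Type*} (A : Matrix (Fin p) (Fin n) α) (B : Matrix (Fin q) (Fin n) α) :
    Matrix (Fin (p + q)) (Fin n) α :=
  Matrix.of (Fin.append A B)

section BlockEncoding

variable {α : Type*}

lemma hcat_eq_submatrix_fromCols {n p q : ℕ} (A : Matrix (Fin n) (Fin p) α)
    (B : Matrix (Fin n) (Fin q) α) :
    hcat A B = (fromCols A B).submatrix id finSumFinEquiv.symm := by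
  ext i j
  obtain ⟨k | k, rfl⟩ := finSumFinEquiv.surjective j <;> simp [hcat]

@[simp]
lemma vcat_apply_castAdd {p q n : ℕ} (A : Matrix (Fin p) (Fin n) α) (B : Matrix (Fin q) (Fin n) α)
    (i : Fin p) (j : Fin n) : vcat A B (Fin.castAdd q i) j = A i j :=
  congrFun (Fin.append_left (α := Fin n → α) A B i) j

@[simp]
lemma vcat_apply_natAdd {p q n : ℕ} (A : Matrix (Fin p) (Fin n) α) (B : Matrix (Fin q) (Fin n) α)
    (i : Fin q) (j : Fin n) : vcat A B (Fin.natAdd p i) j = B i j :=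
  congrFun (Fin.append_right (α := Fin n → α) A B i) j

lemma vcat_hcat_eq_submatrix_fromBlocks {n m : ℕ} (P : Matrix (Fin n) (Fin n) α)
    (Q : Matrix (Fin n) (Fin m) α) (S : Matrix (Fin m) (Fin n) α) (T : Matrix (Fin m) (Fin m) α) :
    vcat (hcat P Q) (hcat S T)
      = (fromBlocks P Q S T).submatrix finSumFinEquiv.symm finSumFinEquiv.symm := by
  ext i j
  obtain ⟨k | k, rfl⟩ := finSumFinEquiv.surjective i <;>
  obtain ⟨l | l, rfl⟩ := finSumFinEquiv.surjective j <;> simp [hcat]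

lemma hcat_mul_vcat_hcat_mul_transpose [NonUnitalNonAssocSemiring α] {k n m : ℕ}
    (A : Matrix (Fin k) (Fin n) α) (B : Matrix (Fin k) (Fin m) α)
    (P : Matrix (Fin n) (Fin n) α) (Q : Matrix (Fin n) (Fin m) α)
    (S : Matrix (Fin m) (Fin n) α) (T : Matrix (Fin m) (Fin m) α) :
    hcat A B * vcat (hcat P Q) (hcat S T) * (hcat A B)ᵀ
      = fromCols A B * fromBlocks P Q S T * (fromCols A B)ᵀ := by
  rw [hcat_eq_submatrix_fromCols, vcat_hcat_eq_submatrix_fromBlocks, transpose_submatrix,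
    submatrix_mul_equiv _ _ id finSumFinEquiv.symm _,
    submatrix_mul_equiv _ _ id finSumFinEquiv.symm id, submatrix_id_id]

end BlockEncoding

section CompletingTheSquare

variable {k n m α : Type*} [Fintype n] [Fintype m] [DecidableEq n] [CommRing α]

lemma fromCols_mul_fromBlocks_mul_transpose_eq_add_schur (A : Matrix k n α) (B : Matrix k m α)
    {X : Matrix n n α} (R : Matrix n m α) (U : Matrix m m α) (hXs : X.IsSymm)
    (hX : IsUnit X.det) {K : Matrix m n α} (hK : K = Rᵀ * X⁻¹) :
    fromCols A B * fromBlocks X R Rᵀ U * (fromCols A B)ᵀ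
      = (A + B * K) * X * (A + B * K)ᵀ + B * (U - Rᵀ * X⁻¹ * R) * Bᵀ := by
  have hKX : K * X = Rᵀ := by rw [hK, Matrix.mul_assoc, nonsing_inv_mul X hX, Matrix.mul_one]
  have hKt : Kᵀ = X⁻¹ * R := by
    rw [hK, transpose_mul, transpose_nonsing_inv, hXs.eq, transpose_transpose]
  have hXKt : X * Kᵀ = R := by rw [hKt, ← Matrix.mul_assoc, mul_nonsing_inv X hX, Matrix.one_mul]
  have hKXKt : K * X * Kᵀ = Rᵀ * X⁻¹ * R := by rw [hKX, hKt, Matrix.mul_assoc]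
  have hclosed : (A + B * K) * X * (A + B * K)ᵀ
      = A * X * Aᵀ + A * (X * Kᵀ) * Bᵀ + B * (K * X) * Aᵀ + B * (K * X * Kᵀ) * Bᵀ := by
    simp only [transpose_add, transpose_mul, Matrix.add_mul, Matrix.mul_add, Matrix.mul_assoc]
    abel
  rw [hclosed, hKXKt, hXKt, hKX, fromCols_mul_fromBlocks, transpose_fromCols,
    fromCols_mul_fromRows, Matrix.mul_sub, Matrix.sub_mul]
  simp only [Matrix.add_mul]
  abel

end CompletingTheSquare

section TrivialStar

variable {n m 𝕜 : Type*}

lemma Matrix.PosSemidef.mul_mul_transpose_same [Fintype n] [Fintype m] [Ring 𝕜] [PartialOrder 𝕜]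
    [StarRing 𝕜] [TrivialStar 𝕜] {A : Matrix n n 𝕜} (hA : A.PosSemidef) (B : Matrix m n 𝕜) :
    (B * A * Bᵀ).PosSemidef := by
  simpa only [conjTranspose_eq_transpose_of_trivial] using hA.mul_mul_conjTranspose_same B

lemma Matrix.PosSemidef.toBlocks₁₁ [Ring 𝕜] [PartialOrder 𝕜] [StarRing 𝕜]
    {M : Matrix (n ⊕ m) (n ⊕ m) 𝕜} (hM : M.PosSemidef) : M.toBlocks₁₁.PosSemidef :=
  hM.submatrix Sum.inl

lemma Matrix.PosDef.fromBlocks₁₁_transpose [Fintype n] [Fintype m] [DecidableEq n] [CommRing 𝕜]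
    [PartialOrder 𝕜] [StarRing 𝕜] [StarOrderedRing 𝕜] [TrivialStar 𝕜] {A : Matrix n n 𝕜}
    (B : Matrix n m 𝕜) (D : Matrix m m 𝕜) (hA : A.PosDef) [Invertible A] :
    (fromBlocks A B Bᵀ D).PosSemidef ↔ (D - Bᵀ * A⁻¹ * B).PosSemidef := by
  simpa only [conjTranspose_eq_transpose_of_trivial] using hA.fromBlocks₁₁ B D

end TrivialStar

theorem stationary_covariance_gives_stabilizing_gain
    {n m M : ℕ}
    (A : Matrix (Fin n) (Fin n) ℝ) (Ai : Fin M → Matrix (Fin n) (Fin n) ℝ)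
    (B : Matrix (Fin n) (Fin m) ℝ)
    (X : Matrix (Fin n) (Fin n) ℝ) (R : Matrix (Fin n) (Fin m) ℝ)
    (U : Matrix (Fin m) (Fin m) ℝ)
    (hV : (vcat (hcat X R) (hcat Rᵀ U)).PosSemidef)
    (heq : X = hcat A B * vcat (hcat X R) (hcat Rᵀ U) * (hcat A B)ᵀ
      + ∑ i, Ai i * X * (Ai i)ᵀ + 1)
    (K : Matrix (Fin m) (Fin n) ℝ) (hK : K = Rᵀ * X⁻¹) :
    (X - 1).PosSemidef ∧ X.PosDef ∧ IsUnit X.det ∧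
      (X - ((A + B * K) * X * (A + B * K)ᵀ + ∑ i, Ai i * X * (Ai i)ᵀ + 1)).PosSemidef := by
  rw [hcat_mul_vcat_hcat_mul_transpose] at heq
  rw [vcat_hcat_eq_submatrix_fromBlocks, posSemidef_submatrix_equiv] at hV
  have hX : X.PosSemidef := by simpa using hV.toBlocks₁₁
  have hnoise : (∑ i, Ai i * X * (Ai i)ᵀ).PosSemidef :=
    posSemidef_sum _ fun i _ => hX.mul_mul_transpose_same (Ai i)
  have hX_sub_one : (X - 1).PosSemidef := by
    rw [sub_eq_of_eq_add heq]
    exact (hV.mul_mul_transpose_same _).add hnoise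
  have hXpd : X.PosDef := by simpa using PosDef.one.add_posSemidef hX_sub_one
  have hdet : IsUnit X.det := (isUnit_iff_isUnit_det X).mp hXpd.isUnit
  have : Invertible X := hXpd.isUnit.invertible
  have hschur := (hXpd.fromBlocks₁₁_transpose R U).mp hV
  have hgap : X - ((A + B * K) * X * (A + B * K)ᵀ + ∑ i, Ai i * X * (Ai i)ᵀ + 1)
      = B * (U - Rᵀ * X⁻¹ * R) * Bᵀ := by
    nth_rewrite 1 [heq]
    rw [fromCols_mul_fromBlocks_mul_transpose_eq_add_schur A B R U
      (isHermitian_iff_isSymm.mp hX.isHermitian) hdet hK]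
    abel
  refine ⟨hX_sub_one, hXpd, hdet, ?_⟩
  rw [hgap]
  exact hschur.mul_mul_transpose_same B
end

section
/- Let A, A_1, …, A_M be real n×n matrices, B a real n×m matrix, C a real p×n matrix, and D a real p×m matrix, and fix a horizon N ≥ 1. On a probability space, let (x_k)_{0≤k≤N}, (u_k)_{0≤k<N}, (w_k)_{0≤k<N}, and (σ_k(i))_{0≤k<N, 1≤i≤M} be random vectors/variables with finite second moments such that: x_0 = 0 almost surely; x_{k+1} = (A + Σ_{i=1}^M σ_k(i) A_i) x_k + B u_k + w_k almost surely for each k; for each k, E[w_k x_kᵀ] = 0, E[w_k u_kᵀ] = 0, E[w_k w_kᵀ] = I_n; and for each k, (σ_k(1),…,σ_k(M)) is independent of (x_k, u_k, w_k) with E[σ_k(i)] = 0 and E[σ_k(i)σ_k(j)] = δ(i−j). Then (1/N) Σ_{k=0}^{N−1} E[‖C x_k + D u_k‖²] ≥ inf { (1/N) Σ_{k=0}^{N−1} Tr([C D] V_k [C D]ᵀ) : (V_k)_{0≤k<N} are positive semidefinite real (n+m)×(n+m) matrices with F V_0 Fᵀ = 0 and F V_{k+1} Fᵀ = [A B] V_k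 [A B]ᵀ + Σ_{i=1}^M A_i F V_k Fᵀ A_iᵀ + I_n for 0 ≤ k < N−1 }, where F = [I_n 0] is the n×(n+m) matrix selecting the first n coordinates. -/
/-!
The second-moment matrices `V k = E[z_k z_kᵀ]` of the joint vectors `z_k = (x_k, u_k)` form a
feasible point whose objective value is exactly the expected cost, which gives the bound.
Feasibility: `V k` is a Gram matrix, hence positive semidefinite, and `F (V k) Fᵀ = E[x_k x_kᵀ]`.
Writing `x_{k+1} = [A B] z_k + w_k + s_k` with `s_k = ∑ i, σ_k(i) A_i x_k`, the independence of
`σ_k` from `(x_k, u_k, w_k)` together with `E σ_k(i) = 0` kills every cross term with `s_k`,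
`E[σ_k(i) σ_k(j)] = δ(i - j)` turns `E[s_k s_kᵀ]` into `∑ i, A_i E[x_k x_kᵀ] A_iᵀ`, and the
assumptions on `w_k` leave `E[w_k w_kᵀ] = 1` as the only other new term.
-/
open MeasureTheory Matrix

/-- `E[a bᵀ]`: the `d × e` matrix of second moments of two random vectors. -/
noncomputable def crossMoment {Ω : Type*} [MeasurableSpace Ω] (μ : Measure Ω)
    {d e : ℕ} (a : Ω → Fin d → ℝ) (b : Ω → Fin e → ℝ) : Matrix (Fin d) (Fin e) ℝ :=
  Matrix.of fun i j => ∫ ω, a ω i * b ω j ∂μ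

open ProbabilityTheory

lemma Matrix.PosSemidef.mul_mul_transpose_same_s12 {R ι κ : Type*} [Ring R] [PartialOrder R]
    [StarRing R] [TrivialStar R] [Fintype ι] [Finite κ] {P : Matrix ι ι R} (hP : P.PosSemidef)
    (G : Matrix κ ι R) : (G * P * Gᵀ).PosSemidef := by
  simpa only [conjTranspose_eq_transpose_of_trivial] using hP.mul_mul_conjTranspose_same G

lemma hcat_mulVec_append {α : Type*} [NonUnitalNonAssocSemiring α] {n p q : ℕ}
    (G : Matrix (Fin n) (Fin p) α) (H : Matrix (Fin n) (Fin q) α) (v : Fin p → α)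
    (u : Fin q → α) : hcat G H *ᵥ Fin.append v u = G *ᵥ v + H *ᵥ u := by
  funext i
  simp [hcat, mulVec, dotProduct, Fin.sum_univ_add]

section CrossMoment

variable {Ω : Type*} [MeasurableSpace Ω] {μ : Measure Ω} {d e q : ℕ}

lemma MeasureTheory.MemLp.mulVec {p : ENNReal} {f : Ω → Fin d → ℝ} (hf : MemLp f p μ)
    (G : Matrix (Fin e) (Fin d) ℝ) : MemLp (fun ω => G *ᵥ f ω) p μ :=
  (Matrix.toLin' G).toContinuousLinearMap.comp_memLp' hf

lemma MeasureTheory.MemLp.append {p : ENNReal} {f : Ω → Fin d → ℝ} {g : Ω → Fin e → ℝ}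
    (hf : MemLp f p μ) (hg : MemLp g p μ) : MemLp (fun ω => Fin.append (f ω) (g ω)) p μ :=
  memLp_pi_iff.2 <| Fin.addCases (fun i => by simpa using hf.eval i)
    (fun j => by simpa using hg.eval j)

@[simp]
lemma crossMoment_apply (f : Ω → Fin d → ℝ) (g : Ω → Fin e → ℝ) (i : Fin d) (j : Fin e) :
    crossMoment μ f g i j = ∫ ω, f ω i * g ω j ∂μ :=
  rfl

lemma MeasureTheory.MemLp.integrable_apply_mul_apply {f : Ω → Fin d → ℝ} {g : Ω → Fin e → ℝ}
    (hf : MemLp f 2 μ) (hg : MemLp g 2 μ) (i : Fin d) (j : Fin e) :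
    Integrable (fun ω => f ω i * g ω j) μ :=
  (hf.eval i).integrable_mul (hg.eval j)

lemma crossMoment_transpose (f : Ω → Fin d → ℝ) (g : Ω → Fin e → ℝ) :
    (crossMoment μ f g)ᵀ = crossMoment μ g f := by
  ext i j
  simp [mul_comm]

lemma crossMoment_congr_ae {f f' : Ω → Fin d → ℝ} {g g' : Ω → Fin e → ℝ}
    (hf : f =ᵐ[μ] f') (hg : g =ᵐ[μ] g') : crossMoment μ f g = crossMoment μ f' g' := by
  ext i j
  exact integral_congr_ae (by filter_upwards [hf, hg] with ω hfω hgω; rw [hfω, hgω])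

lemma crossMoment_add_left {f₁ f₂ : Ω → Fin d → ℝ} {g : Ω → Fin e → ℝ}
    (hf₁ : MemLp f₁ 2 μ) (hf₂ : MemLp f₂ 2 μ) (hg : MemLp g 2 μ) :
    crossMoment μ (fun ω => f₁ ω + f₂ ω) g = crossMoment μ f₁ g + crossMoment μ f₂ g := by
  ext i j
  simp only [crossMoment_apply, Matrix.add_apply, Pi.add_apply, add_mul]
  exact integral_add (hf₁.integrable_apply_mul_apply hg i j)
    (hf₂.integrable_apply_mul_apply hg i j)

lemma crossMoment_add_right {f : Ω → Fin d → ℝ} {g₁ g₂ : Ω → Fin e → ℝ}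
    (hf : MemLp f 2 μ) (hg₁ : MemLp g₁ 2 μ) (hg₂ : MemLp g₂ 2 μ) :
    crossMoment μ f (fun ω => g₁ ω + g₂ ω) = crossMoment μ f g₁ + crossMoment μ f g₂ := by
  rw [← crossMoment_transpose, crossMoment_add_left hg₁ hg₂ hf, transpose_add,
    crossMoment_transpose, crossMoment_transpose]

lemma crossMoment_add_self_of_eq_zero {f g : Ω → Fin d → ℝ} (hf : MemLp f 2 μ)
    (hg : MemLp g 2 μ) (hfg : crossMoment μ f g = 0) :
    crossMoment μ (fun ω => f ω + g ω) (fun ω => f ω + g ω)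
      = crossMoment μ f f + crossMoment μ g g := by
  have hgf : crossMoment μ g f = 0 := by rw [← crossMoment_transpose, hfg, transpose_zero]
  rw [crossMoment_add_left (g := fun ω => f ω + g ω) hf hg (hf.add hg),
    crossMoment_add_right hf hf hg, crossMoment_add_right hg hf hg, hfg, hgf, add_zero, zero_add]

lemma crossMoment_mulVec_left {f : Ω → Fin d → ℝ} {g : Ω → Fin e → ℝ}
    (hf : MemLp f 2 μ) (hg : MemLp g 2 μ) (G : Matrix (Fin q) (Fin d) ℝ) :
    crossMoment μ (fun ω => G *ᵥ f ω) g = G * crossMoment μ f g := by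
  ext i j
  simp only [crossMoment_apply, mulVec, dotProduct, Finset.sum_mul, mul_apply]
  rw [integral_finsetSum _ fun a _ => by
    simpa only [mul_assoc] using (hf.integrable_apply_mul_apply hg a j).const_mul (G i a)]
  simp only [mul_assoc, integral_const_mul]

lemma crossMoment_mulVec_mulVec {f : Ω → Fin d → ℝ} {g : Ω → Fin e → ℝ}
    (hf : MemLp f 2 μ) (hg : MemLp g 2 μ) (G : Matrix (Fin q) (Fin d) ℝ)
    {r : ℕ} (H : Matrix (Fin r) (Fin e) ℝ) :
    crossMoment μ (fun ω => G *ᵥ f ω) (fun ω => H *ᵥ g ω) = G * crossMoment μ f g * Hᵀ := by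
  rw [crossMoment_mulVec_left hf (hg.mulVec H), ← crossMoment_transpose (fun ω => H *ᵥ g ω),
    crossMoment_mulVec_left hg hf, transpose_mul, crossMoment_transpose, Matrix.mul_assoc]

lemma crossMoment_self_posSemidef {f : Ω → Fin d → ℝ} (hf : MemLp f 2 μ) :
    (crossMoment μ f f).PosSemidef := by
  refine PosSemidef.of_dotProduct_mulVec_nonneg ?_ fun y => ?_
  · rw [IsHermitian, conjTranspose_eq_transpose_of_trivial, crossMoment_transpose]
  · -- `yᵀ E[f fᵀ] y` is the second moment of the scalar `yᵀ f`.
    have hquad : star y ⬝ᵥ crossMoment μ f f *ᵥ y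
        = crossMoment μ (fun ω => of (fun _ : Fin 1 => y) *ᵥ f ω)
            (fun ω => of (fun _ : Fin 1 => y) *ᵥ f ω) 0 0 := by
      rw [crossMoment_mulVec_mulVec hf hf]
      simp [mul_apply, dotProduct, mulVec, Finset.mul_sum, mul_comm]
    rw [hquad, crossMoment_apply]
    exact integral_nonneg fun ω => mul_self_nonneg _

lemma trace_crossMoment_self {f : Ω → Fin d → ℝ} (hf : MemLp f 2 μ) :
    (crossMoment μ f f).trace = ∫ ω, ∑ i, f ω i ^ 2 ∂μ := by
  rw [integral_finsetSum _ fun i _ => (hf.eval i).integrable_sq]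
  simp [trace, sq]

lemma hcat_mul_crossMoment_append_mul_transpose {f : Ω → Fin d → ℝ} {g : Ω → Fin e → ℝ}
    (hf : MemLp f 2 μ) (hg : MemLp g 2 μ) (G : Matrix (Fin q) (Fin d) ℝ)
    (H : Matrix (Fin q) (Fin e) ℝ) :
    hcat G H * crossMoment μ (fun ω => Fin.append (f ω) (g ω))
        (fun ω => Fin.append (f ω) (g ω)) * (hcat G H)ᵀ
      = crossMoment μ (fun ω => G *ᵥ f ω + H *ᵥ g ω) (fun ω => G *ᵥ f ω + H *ᵥ g ω) := by
  rw [← crossMoment_mulVec_mulVec (hf.append hg) (hf.append hg)]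
  simp only [hcat_mulVec_append]

end CrossMoment

lemma ProbabilityTheory.IndepFun.memLp_two_mul {Ω : Type*} [MeasurableSpace Ω] {μ : Measure Ω}
    {f g : Ω → ℝ} (hfg : IndepFun f g μ) (hf : MemLp f 2 μ) (hg : MemLp g 2 μ) :
    MemLp (fun ω => f ω * g ω) 2 μ := by
  refine (memLp_two_iff_integrable_sq (hf.1.mul hg.1)).2 ?_
  have hsq : Measurable fun x : ℝ => x ^ 2 := measurable_id.pow_const 2
  simp only [Pi.mul_apply, mul_pow]
  exact (hfg.comp hsq hsq).integrable_mul hf.integrable_sq hg.integrable_sq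

section MultiplicativeNoise

variable {Ω β : Type*} [MeasurableSpace Ω] [MeasurableSpace β] {μ : Measure Ω} {M d : ℕ}
  {ξ : Ω → Fin M → ℝ} {Y : Ω → β} {v : Fin M → β → Fin d → ℝ}

lemma memLp_sum_smul_of_indepFun (hind : IndepFun ξ Y μ)
    (hξ : ∀ i, MemLp (fun ω => ξ ω i) 2 μ) (hv : ∀ i, Measurable (v i))
    (hv2 : ∀ i, MemLp (fun ω => v i (Y ω)) 2 μ) :
    MemLp (fun ω => ∑ i, ξ ω i • v i (Y ω)) 2 μ :=
  memLp_finsetSum _ fun i _ => memLp_pi_iff.2 fun b =>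
    (hind.comp (measurable_pi_apply i) ((measurable_pi_apply b).comp (hv i))).memLp_two_mul
      (hξ i) ((hv2 i).eval b)

lemma crossMoment_comp_sum_smul_eq_zero [IsFiniteMeasure μ] {e : ℕ} (hind : IndepFun ξ Y μ)
    (hξ : ∀ i, MemLp (fun ω => ξ ω i) 2 μ) (hmean : ∀ i, ∫ ω, ξ ω i ∂μ = 0)
    {φ : β → Fin e → ℝ} (hφ : Measurable φ) (hφ2 : MemLp (fun ω => φ (Y ω)) 2 μ)
    (hv : ∀ i, Measurable (v i)) (hv2 : ∀ i, MemLp (fun ω => v i (Y ω)) 2 μ) :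
    crossMoment μ (fun ω => φ (Y ω)) (fun ω => ∑ i, ξ ω i • v i (Y ω)) = 0 := by
  ext a b
  have hindep : ∀ i, IndepFun (fun ω => ξ ω i) (fun ω => φ (Y ω) a * v i (Y ω) b) μ := fun i =>
    hind.comp (measurable_pi_apply i)
      (((measurable_pi_apply a).comp hφ).mul ((measurable_pi_apply b).comp (hv i)))
  have hint : ∀ i, Integrable (fun ω => φ (Y ω) a * v i (Y ω) b) μ := fun i =>
    hφ2.integrable_apply_mul_apply (hv2 i) a b
  have hξint : ∀ i, Integrable (fun ω => ξ ω i) μ := fun i => (hξ i).integrable one_le_two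
  calc ∫ ω, φ (Y ω) a * (∑ i, ξ ω i • v i (Y ω)) b ∂μ
      = ∫ ω, ∑ i, ξ ω i * (φ (Y ω) a * v i (Y ω) b) ∂μ := by
        congr 1 with ω
        simp only [Finset.sum_apply, Pi.smul_apply, smul_eq_mul, Finset.mul_sum]
        exact Finset.sum_congr rfl fun i _ => by ring
    _ = ∑ i, (∫ ω, ξ ω i ∂μ) * ∫ ω, φ (Y ω) a * v i (Y ω) b ∂μ := by
        rw [integral_finsetSum (f := fun i ω => ξ ω i * (φ (Y ω) a * v i (Y ω) b)) _
          fun i _ => (hindep i).integrable_mul (hξint i) (hint i)]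
        exact Finset.sum_congr rfl fun i _ => (hindep i).integral_mul_eq_mul_integral
          (hξint i).1 (hint i).1
    _ = 0 := by simp [hmean]

lemma crossMoment_sum_smul_self_of_indepFun [IsFiniteMeasure μ] (hind : IndepFun ξ Y μ)
    (hξ : ∀ i, MemLp (fun ω => ξ ω i) 2 μ)
    (hcov : ∀ i j, ∫ ω, ξ ω i * ξ ω j ∂μ = if i = j then 1 else 0)
    (hv : ∀ i, Measurable (v i)) (hv2 : ∀ i, MemLp (fun ω => v i (Y ω)) 2 μ) :
    crossMoment μ (fun ω => ∑ i, ξ ω i • v i (Y ω)) (fun ω => ∑ i, ξ ω i • v i (Y ω))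
      = ∑ i, crossMoment μ (fun ω => v i (Y ω)) (fun ω => v i (Y ω)) := by
  ext a b
  have hindep : ∀ i j, IndepFun (fun ω => ξ ω i * ξ ω j)
      (fun ω => v i (Y ω) a * v j (Y ω) b) μ := fun i j =>
    hind.comp ((measurable_pi_apply i).mul (measurable_pi_apply j))
      (((measurable_pi_apply a).comp (hv i)).mul ((measurable_pi_apply b).comp (hv j)))
  have hξint : ∀ i j, Integrable (fun ω => ξ ω i * ξ ω j) μ := fun i j =>
    (hξ i).integrable_mul (hξ j)
  have hint : ∀ i j, Integrable (fun ω => v i (Y ω) a * v j (Y ω) b) μ := fun i j =>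
    (hv2 i).integrable_apply_mul_apply (hv2 j) a b
  have hterm : ∀ i j, Integrable (fun ω => ξ ω i * ξ ω j * (v i (Y ω) a * v j (Y ω) b)) μ :=
    fun i j => (hindep i j).integrable_mul (hξint i j) (hint i j)
  calc ∫ ω, (∑ i, ξ ω i • v i (Y ω)) a * (∑ i, ξ ω i • v i (Y ω)) b ∂μ
      = ∫ ω, ∑ i, ∑ j, ξ ω i * ξ ω j * (v i (Y ω) a * v j (Y ω) b) ∂μ := by
        congr 1 with ω
        simp only [Finset.sum_apply, Pi.smul_apply, smul_eq_mul, Finset.sum_mul_sum]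
        exact Finset.sum_congr rfl fun i _ => Finset.sum_congr rfl fun j _ => by ring
    _ = ∑ i, ∑ j, (if i = j then 1 else 0) * ∫ ω, v i (Y ω) a * v j (Y ω) b ∂μ := by
        rw [integral_finsetSum _ fun i _ => integrable_finsetSum _ fun j _ => hterm i j]
        refine Finset.sum_congr rfl fun i _ => ?_
        rw [integral_finsetSum (f := fun j ω => ξ ω i * ξ ω j * (v i (Y ω) a * v j (Y ω) b)) _
          fun j _ => hterm i j]
        refine Finset.sum_congr rfl fun j _ => ?_
        rw [← hcov i j]
        exact (hindep i j).integral_mul_eq_mul_integral (hξint i j).1 (hint i j).1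
    _ = (∑ i, crossMoment μ (fun ω => v i (Y ω)) (fun ω => v i (Y ω))) a b := by
        simp [Matrix.sum_apply]

end MultiplicativeNoise

section LinearSystem

variable {Ω : Type*} [MeasurableSpace Ω] {μ : Measure Ω} {n m M : ℕ}

lemma crossMoment_self_of_noisy_linear_step [IsFiniteMeasure μ]
    (A : Matrix (Fin n) (Fin n) ℝ) (Ai : Fin M → Matrix (Fin n) (Fin n) ℝ)
    (B : Matrix (Fin n) (Fin m) ℝ) {x x' w : Ω → Fin n → ℝ} {u : Ω → Fin m → ℝ}
    {ξ : Ω → Fin M → ℝ} (hx : MemLp x 2 μ) (hu : MemLp u 2 μ) (hw : MemLp w 2 μ)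
    (hξ : ∀ i, MemLp (fun ω => ξ ω i) 2 μ)
    (hx' : ∀ᵐ ω ∂μ, x' ω = (A + ∑ i, ξ ω i • Ai i) *ᵥ x ω + B *ᵥ u ω + w ω)
    (hwx : crossMoment μ w x = 0) (hwu : crossMoment μ w u = 0) (hww : crossMoment μ w w = 1)
    (hind : IndepFun ξ (fun ω => (x ω, u ω, w ω)) μ) (hmean : ∀ i, ∫ ω, ξ ω i ∂μ = 0)
    (hcov : ∀ i j, ∫ ω, ξ ω i * ξ ω j ∂μ = if i = j then 1 else 0) :
    crossMoment μ x' x'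
      = crossMoment μ (fun ω => A *ᵥ x ω + B *ᵥ u ω) (fun ω => A *ᵥ x ω + B *ᵥ u ω)
        + ∑ i, Ai i * crossMoment μ x x * (Ai i)ᵀ + 1 := by
  set Y := fun ω => (x ω, u ω, w ω)
  set g := fun ω => A *ᵥ x ω + B *ᵥ u ω
  set s := fun ω => ∑ i, ξ ω i • Ai i *ᵥ x ω
  have hg : MemLp g 2 μ := (hx.mulVec A).add (hu.mulVec B)
  have hAx : ∀ i, MemLp (fun ω => Ai i *ᵥ x ω) 2 μ := fun i => hx.mulVec (Ai i)
  have hv : ∀ i, Measurable fun t : (Fin n → ℝ) × (Fin m → ℝ) × (Fin n → ℝ) => Ai i *ᵥ t.1 :=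
    fun i => (continuous_const.matrix_mulVec continuous_fst).measurable
  have hs : MemLp s 2 μ :=
    memLp_sum_smul_of_indepFun (Y := Y) (v := fun i t => Ai i *ᵥ t.1) hind hξ hv hAx
  have hgw : crossMoment μ g w = 0 := by
    rw [crossMoment_add_left (hx.mulVec A) (hu.mulVec B) hw, crossMoment_mulVec_left hx hw,
      crossMoment_mulVec_left hu hw, ← crossMoment_transpose w, ← crossMoment_transpose w, hwx,
      hwu]
    simp
  have hys : crossMoment μ (fun ω => g ω + w ω) s = 0 :=
    crossMoment_comp_sum_smul_eq_zero (φ := fun t => A *ᵥ t.1 + B *ᵥ t.2.1 + t.2.2) hind hξ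
      hmean (Continuous.measurable (by fun_prop)) (hg.add hw) hv hAx
  have hx's : x' =ᵐ[μ] fun ω => g ω + w ω + s ω := hx'.mono fun ω h => by
    rw [h, add_mulVec, sum_mulVec]
    simp only [g, s, smul_mulVec]
    abel
  calc crossMoment μ x' x'
      = crossMoment μ (fun ω => g ω + w ω + s ω) (fun ω => g ω + w ω + s ω) :=
        crossMoment_congr_ae hx's hx's
    _ = crossMoment μ g g + crossMoment μ w w + crossMoment μ s s := by
        rw [crossMoment_add_self_of_eq_zero (f := fun ω => g ω + w ω) (hg.add hw) hs hys,
          crossMoment_add_self_of_eq_zero hg hw hgw]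
    _ = _ := by
        rw [hww, crossMoment_sum_smul_self_of_indepFun (Y := Y) (v := fun i t => Ai i *ᵥ t.1)
          hind hξ hcov hv hAx, add_right_comm]
        congr 2
        exact Finset.sum_congr rfl fun i _ => crossMoment_mulVec_mulVec hx hx (Ai i) (Ai i)

end LinearSystem

theorem sdp_lower_bound_finite_horizon
    {Ω : Type*} [MeasurableSpace Ω] (μ : Measure Ω) [IsProbabilityMeasure μ]
    {n m M p N : ℕ} (hN : 1 ≤ N)
    (A : Matrix (Fin n) (Fin n) ℝ) (Ai : Fin M → Matrix (Fin n) (Fin n) ℝ)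
    (B : Matrix (Fin n) (Fin m) ℝ)
    (C : Matrix (Fin p) (Fin n) ℝ) (D : Matrix (Fin p) (Fin m) ℝ)
    (x : ℕ → Ω → Fin n → ℝ) (u : ℕ → Ω → Fin m → ℝ)
    (w : ℕ → Ω → Fin n → ℝ) (σ : ℕ → Fin M → Ω → ℝ)
    (hxmom : ∀ k ≤ N, MemLp (x k) 2 μ)
    (humom : ∀ k < N, MemLp (u k) 2 μ)
    (hwmom : ∀ k < N, MemLp (w k) 2 μ)
    (hσmom : ∀ k < N, ∀ i, MemLp (σ k i) 2 μ)
    (hx0 : ∀ᵐ ω ∂μ, x 0 ω = 0)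
    (hxrec : ∀ k < N, ∀ᵐ ω ∂μ, x (k + 1) ω =
      (A + ∑ i, σ k i ω • Ai i).mulVec (x k ω) + B.mulVec (u k ω) + w k ω)
    (hwx : ∀ k < N, crossMoment μ (w k) (x k) = 0)
    (hwu : ∀ k < N, crossMoment μ (w k) (u k) = 0)
    (hww : ∀ k < N, crossMoment μ (w k) (w k) = 1)
    (hσindep : ∀ k < N, ProbabilityTheory.IndepFun (fun ω i => σ k i ω)
      (fun ω => (x k ω, u k ω, w k ω)) μ)
    (hσmean : ∀ k < N, ∀ i, ∫ ω, σ k i ω ∂μ = 0)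
    (hσcov : ∀ k < N, ∀ i j, ∫ ω, σ k i ω * σ k j ω ∂μ = if i = j then (1 : ℝ) else 0)
    (F : Matrix (Fin n) (Fin (n + m)) ℝ)
    (hF : F = hcat (1 : Matrix (Fin n) (Fin n) ℝ) (0 : Matrix (Fin n) (Fin m) ℝ)) :
    (1 / (N : ℝ)) * ∑ k ∈ Finset.range N,
        ∫ ω, ∑ i, (C.mulVec (x k ω) + D.mulVec (u k ω)) i ^ 2 ∂μ
      ≥ sInf { c : ℝ | ∃ V : ℕ → Matrix (Fin (n + m)) (Fin (n + m)) ℝ,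
          (∀ k < N, (V k).PosSemidef) ∧
          F * V 0 * Fᵀ = 0 ∧
          (∀ k < N - 1, F * V (k + 1) * Fᵀ =
            hcat A B * V k * (hcat A B)ᵀ
              + ∑ i, Ai i * (F * V k * Fᵀ) * (Ai i)ᵀ + 1) ∧
          c = (1 / (N : ℝ)) * ∑ k ∈ Finset.range N,
            (hcat C D * V k * (hcat C D)ᵀ).trace } := by
  set V := fun k => crossMoment μ (fun ω => Fin.append (x k ω) (u k ω))
    (fun ω => Fin.append (x k ω) (u k ω))
  have hV : ∀ k < N, ∀ {q : ℕ} (G : Matrix (Fin q) (Fin n) ℝ) (H : Matrix (Fin q) (Fin m) ℝ),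
      hcat G H * V k * (hcat G H)ᵀ
        = crossMoment μ (fun ω => G *ᵥ x k ω + H *ᵥ u k ω) (fun ω => G *ᵥ x k ω + H *ᵥ u k ω) :=
    fun k hk _ G H => hcat_mul_crossMoment_append_mul_transpose (hxmom k hk.le) (humom k hk) G H
  have hFV : ∀ k < N, F * V k * Fᵀ = crossMoment μ (x k) (x k) := fun k hk => by
    simpa [hF] using hV k hk (1 : Matrix (Fin n) (Fin n) ℝ) 0
  refine csInf_le ?_ ⟨V, fun k hk => crossMoment_self_posSemidef
    ((hxmom k hk.le).append (humom k hk)), ?_, fun k hk => ?_, ?_⟩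
  · refine ⟨0, ?_⟩
    rintro c ⟨W, hW, -, -, rfl⟩
    exact mul_nonneg (by positivity) <| Finset.sum_nonneg fun k hk =>
      ((hW k (Finset.mem_range.1 hk)).mul_mul_transpose_same_s12 (hcat C D)).trace_nonneg
  · rw [hFV 0 hN, crossMoment_congr_ae hx0 hx0]
    ext
    simp
  · have hk' : k < N := by omega
    rw [hFV (k + 1) (by omega), hFV k hk', hV k hk']
    exact crossMoment_self_of_noisy_linear_step A Ai B (hxmom k hk'.le) (humom k hk')
      (hwmom k hk') (hσmom k hk') (hxrec k hk') (hwx k hk') (hwu k hk') (hww k hk')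
      (hσindep k hk') (hσmean k hk') (hσcov k hk')
  · refine congrArg _ (Finset.sum_congr rfl fun k hk => ?_)
    have hk' := Finset.mem_range.1 hk
    rw [hV k hk']
    exact (trace_crossMoment_self (((hxmom k hk'.le).mulVec C).add ((humom k hk').mulVec D))).symm
end
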